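/- Let n be a positive integer, let D = Diag(d₁, …, d_n) be a diagonal real n×n matrix with 1 > d₁ ≥ d₂ ≥ … ≥ d_n > 0, and write D^{1/2} = Diag(√d₁, …, √d_n). For every symmetric real n×n matrix Q with D ⪯ Q ⪯ D⁻¹ such that both I − D^{1/2}Q⁻¹D^{1/2} and I − D^{1/2}Q D^{1/2} are positive definite, one has (1/2)·∑_{i=1}^n ln(1 − dᵢ²) − (1/2)·ln det((I − D^{1/2}Q⁻¹D^{1/2})(I − D^{1/2}Q D^{1/2})) ≥ (1/2)·∑_{i=1}^n ln((1 + dᵢ)/(1 − dᵢ)), with equality if and only if Q = I. -/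

import Mathlib

open Matrix

/-!
With `S = D^{1/2}`, `A = I - S Q⁻¹ S` and `B = I - S Q S`, after taking logarithms the claim is
`det A · det B ≤ det (I - D)²`, with equality only at `Q = I`. Since
`Q + Q⁻¹ - 2 = (Q - 1) Q⁻¹ (Q - 1) ⪰ 0`, we get `A + B ⪯ A + B + S (Q + Q⁻¹ - 2) S = 2 (I - D)`, and
the determinantal AM–GM inequality `4ⁿ det A det B ≤ det (A + B)²` together with monotonicity of
`det` on positive definite matrices gives the inequality. In the equality case `det` does not
increase from `A + B` to `A + B + S (Q + Q⁻¹ - 2) S`, which forces `Q + Q⁻¹ = 2`, hence `Q = I`.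
Both determinant inequalities reduce, through a congruence `C = Yᴴ Y`, to the scalar inequalities
`1 ≤ 1 + λ` and `4 λ ≤ (1 + λ)²` for the eigenvalues `λ ≥ 0` of a positive semidefinite matrix.
-/

namespace Matrix

variable {m : Type*} [Fintype m] [DecidableEq m]

section RCLike

open scoped ComplexOrder

variable {𝕜 : Type*} [RCLike 𝕜]

theorem PosDef.exists_simultaneous_congr {C N : Matrix m m 𝕜}
    (hC : C.PosDef) (hN : N.PosSemidef) :
    ∃ Y M : Matrix m m 𝕜, IsUnit Y ∧ M.PosSemidef ∧ C = Yᴴ * Y ∧ N = Yᴴ * M * Y := by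
  open scoped MatrixOrder in
  obtain ⟨Y, hY, rfl⟩ :=
    CStarAlgebra.isStrictlyPositive_iff_eq_star_mul_self.mp hC.isStrictlyPositive
  refine ⟨Y, (Y⁻¹)ᴴ * N * Y⁻¹, hY, hN.conjTranspose_mul_mul_same _, rfl, ?_⟩
  have hYY : Y⁻¹ * Y = 1 := nonsing_inv_mul Y ((isUnit_iff_isUnit_det Y).mp hY)
  rw [← Matrix.mul_assoc, ← Matrix.mul_assoc, ← conjTranspose_mul, hYY, Matrix.mul_assoc, hYY,
    conjTranspose_one, Matrix.one_mul, Matrix.mul_one]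

variable {Q : Matrix m m 𝕜}

theorem PosDef.posSemidef_add_inv_sub_two (hQ : Q.PosDef) : (Q + Q⁻¹ - 2).PosSemidef := by
  have hQQ : Q * Q⁻¹ = 1 := mul_nonsing_inv Q ((isUnit_iff_isUnit_det Q).mp hQ.isUnit)
  have hQQ' : Q⁻¹ * Q = 1 := nonsing_inv_mul Q ((isUnit_iff_isUnit_det Q).mp hQ.isUnit)
  have h : (Q - 1)ᴴ * Q⁻¹ * (Q - 1) = Q + Q⁻¹ - 2 := by
    rw [conjTranspose_sub, hQ.isHermitian.eq, conjTranspose_one]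
    calc (Q - 1) * Q⁻¹ * (Q - 1) = Q * Q⁻¹ * Q - Q * Q⁻¹ - Q⁻¹ * Q + Q⁻¹ := by noncomm_ring
      _ = Q + Q⁻¹ - 2 := by rw [hQQ, hQQ', Matrix.one_mul, ← one_add_one_eq_two]; abel
  exact h ▸ hQ.inv.posSemidef.conjTranspose_mul_mul_same _

theorem IsHermitian.eq_one_of_add_inv_eq_two (hQ : Q.IsHermitian) (hQu : IsUnit Q)
    (h : Q + Q⁻¹ = 2) : Q = 1 := by
  have hQQ : Q * Q⁻¹ = 1 := mul_nonsing_inv Q ((isUnit_iff_isUnit_det Q).mp hQu)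
  have hsq : (Q - 1)ᴴ * (Q - 1) = 0 := by
    rw [conjTranspose_sub, hQ.eq, conjTranspose_one]
    calc (Q - 1) * (Q - 1) = Q * (Q + Q⁻¹) - 2 * Q := by
          rw [Matrix.mul_add, hQQ]; noncomm_ring
      _ = 0 := by rw [h]; noncomm_ring
  exact sub_eq_zero.mp (conjTranspose_mul_self_eq_zero.mp hsq)

end RCLike

namespace PosSemidef

variable {M : Matrix m m ℝ} (hM : M.PosSemidef)
include hM

theorem det_one_add_eq_prod_eigenvalues :
    (1 + M).det = ∏ i, (1 + hM.isHermitian.eigenvalues i) := by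
  set U : Matrix m m ℝ := (hM.isHermitian.eigenvectorUnitary : Matrix m m ℝ)
  have hU : U * star U = 1 := mem_unitaryGroup_iff.mp hM.isHermitian.eigenvectorUnitary.2
  have hspec : M = U * diagonal hM.isHermitian.eigenvalues * star U := by
    simpa using hM.isHermitian.spectral_theorem
  have : 1 + M = U * diagonal (fun i => 1 + hM.isHermitian.eigenvalues i) * star U := by
    have hdiag : diagonal (fun i => 1 + hM.isHermitian.eigenvalues i) =
        1 + diagonal hM.isHermitian.eigenvalues := by
      rw [← diagonal_one, diagonal_add]
    rw [hdiag, Matrix.mul_add, Matrix.add_mul, Matrix.mul_one, hU, ← hspec]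
  rw [this, det_mul_right_comm, hU, Matrix.one_mul, det_diagonal]

theorem one_le_det_one_add : 1 ≤ (1 + M).det := by
  rw [hM.det_one_add_eq_prod_eigenvalues]
  exact Finset.one_le_prod fun i _ => le_add_of_nonneg_right (hM.eigenvalues_nonneg i)

theorem det_one_add_eq_one_iff : (1 + M).det = 1 ↔ M = 0 := by
  refine ⟨fun h => ?_, fun h => by simp [h]⟩
  rw [← hM.isHermitian.eigenvalues_eq_zero_iff]
  by_contra hne
  obtain ⟨j, hj⟩ := Function.ne_iff.mp hne
  have hlt : ∏ _i : m, (1 : ℝ) < (1 + M).det := by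
    rw [hM.det_one_add_eq_prod_eigenvalues]
    refine Finset.prod_lt_prod (fun _ _ => one_pos) (fun i _ => ?_) ⟨j, Finset.mem_univ j, ?_⟩
    · exact le_add_of_nonneg_right (hM.eigenvalues_nonneg i)
    · exact lt_add_of_pos_right 1 ((hM.eigenvalues_nonneg j).lt_of_ne' hj)
  simp [h] at hlt

theorem four_pow_card_mul_det_le_det_one_add_sq :
    4 ^ Fintype.card m * M.det ≤ (1 + M).det ^ 2 := by
  rw [hM.det_one_add_eq_prod_eigenvalues, hM.isHermitian.det_eq_prod_eigenvalues,
    ← Finset.prod_pow, ← Finset.card_univ, ← Finset.prod_const, ← Finset.prod_mul_distrib]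
  simp only [RCLike.ofReal_real_eq_id, id_eq]
  refine Finset.prod_le_prod (fun i _ => by positivity [hM.eigenvalues_nonneg i]) fun i _ => ?_
  nlinarith [sq_nonneg (1 - hM.isHermitian.eigenvalues i)]

end PosSemidef

theorem det_conjTranspose_mul_mul (Y X : Matrix m m ℝ) :
    (Yᴴ * X * Y).det = Y.det ^ 2 * X.det := by
  rw [det_mul, det_mul, det_conjTranspose, star_trivial]; ring

theorem det_conjTranspose_mul_self (Y : Matrix m m ℝ) : (Yᴴ * Y).det = Y.det ^ 2 := by
  simpa using det_conjTranspose_mul_mul Y 1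

namespace PosDef

variable {C N : Matrix m m ℝ}

theorem det_le_det_add (hC : C.PosDef) (hN : N.PosSemidef) : C.det ≤ (C + N).det := by
  obtain ⟨Y, M, hY, hM, rfl, rfl⟩ := hC.exists_simultaneous_congr hN
  have hsum : Yᴴ * Y + Yᴴ * M * Y = Yᴴ * (1 + M) * Y := by noncomm_ring
  have hdet : 0 < Y.det ^ 2 := pow_two_pos_of_ne_zero ((isUnit_iff_isUnit_det Y).mp hY).ne_zero
  rw [hsum, det_conjTranspose_mul_mul, det_conjTranspose_mul_self]
  exact le_mul_of_one_le_right hdet.le hM.one_le_det_one_add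

theorem det_add_eq_det_iff (hC : C.PosDef) (hN : N.PosSemidef) :
    (C + N).det = C.det ↔ N = 0 := by
  obtain ⟨Y, M, hY, hM, rfl, rfl⟩ := hC.exists_simultaneous_congr hN
  have hsum : Yᴴ * Y + Yᴴ * M * Y = Yᴴ * (1 + M) * Y := by noncomm_ring
  have hdet : 0 < Y.det ^ 2 := pow_two_pos_of_ne_zero ((isUnit_iff_isUnit_det Y).mp hY).ne_zero
  rw [hsum, det_conjTranspose_mul_mul, det_conjTranspose_mul_self,
    mul_eq_left₀ hdet.ne', hM.det_one_add_eq_one_iff, hY.mul_left_eq_zero,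
    ← star_eq_conjTranspose, hY.star.mul_right_eq_zero]

theorem four_pow_card_mul_det_mul_det_le_det_add_sq {A B : Matrix m m ℝ} (hA : A.PosDef)
    (hB : B.PosSemidef) : 4 ^ Fintype.card m * (A.det * B.det) ≤ (A + B).det ^ 2 := by
  obtain ⟨Y, M, -, hM, rfl, rfl⟩ := hA.exists_simultaneous_congr hB
  have hsum : Yᴴ * Y + Yᴴ * M * Y = Yᴴ * (1 + M) * Y := by noncomm_ring
  rw [hsum, det_conjTranspose_mul_mul, det_conjTranspose_mul_mul, det_conjTranspose_mul_self]
  linear_combination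
    mul_le_mul_of_nonneg_left hM.four_pow_card_mul_det_le_det_one_add_sq (sq_nonneg (Y.det ^ 2))

end PosDef

theorem det_mul_det_le_det_sq_of_add_add_eq_two_smul {A B N C : Matrix m m ℝ} (hA : A.PosDef)
    (hB : B.PosSemidef) (hN : N.PosSemidef) (h : A + B + N = (2 : ℝ) • C) :
    A.det * B.det ≤ C.det ^ 2 ∧ (A.det * B.det = C.det ^ 2 → N = 0) := by
  have hAB : (A + B).PosDef := hA.add_posSemidef hB
  have hABN : (A + B + N).det ^ 2 = 4 ^ Fintype.card m * C.det ^ 2 := by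
    rw [h, det_smul, mul_pow, ← pow_mul, mul_comm _ 2, pow_mul]; norm_num
  have hamgm := hA.four_pow_card_mul_det_mul_det_le_det_add_sq hB
  have hmono : (A + B).det ^ 2 ≤ (A + B + N).det ^ 2 :=
    pow_le_pow_left₀ hAB.det_pos.le (hAB.det_le_det_add hN) 2
  have h4 : (0 : ℝ) < 4 ^ Fintype.card m := by positivity
  refine ⟨le_of_mul_le_mul_left (by linarith) h4, fun heq => ?_⟩
  rw [← hAB.det_add_eq_det_iff hN]
  refine (pow_left_inj₀ (hAB.add_posSemidef hN).det_pos.le hAB.det_pos.le two_ne_zero).mp ?_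
  rw [heq] at hamgm
  linarith

theorem det_one_sub_conj_inv_mul_det_one_sub_conj_le {S Q : Matrix m m ℝ} (hS : S.IsHermitian)
    (hSu : IsUnit S) (hQ : Q.PosDef) (hA : (1 - S * Q⁻¹ * S).PosDef)
    (hB : (1 - S * Q * S).PosDef) :
    (1 - S * Q⁻¹ * S).det * (1 - S * Q * S).det ≤ (1 - S * S).det ^ 2 ∧
      ((1 - S * Q⁻¹ * S).det * (1 - S * Q * S).det = (1 - S * S).det ^ 2 ↔ Q = 1) := by
  have hN := hQ.posSemidef_add_inv_sub_two.conjTranspose_mul_mul_same S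
  rw [hS.eq] at hN
  have hsum : (1 - S * Q⁻¹ * S) + (1 - S * Q * S) + S * (Q + Q⁻¹ - 2) * S =
      (2 : ℝ) • (1 - S * S) := by
    rw [two_smul]; noncomm_ring
  obtain ⟨hle, heq⟩ := det_mul_det_le_det_sq_of_add_add_eq_two_smul hA hB.posSemidef hN hsum
  refine ⟨hle, fun h => hQ.isHermitian.eq_one_of_add_inv_eq_two hQ.isUnit ?_, ?_⟩
  · simpa [hSu.mul_left_eq_zero, hSu.mul_right_eq_zero, sub_eq_zero] using heq h
  · rintro rfl
    simp [sq]

end Matrix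

theorem Real.sum_log_one_sub_sq {ι : Type*} [Fintype ι] (d : ι → ℝ) (hd : ∀ i, |d i| < 1) :
    ∑ i, Real.log (1 - d i ^ 2) =
      ∑ i, Real.log ((1 + d i) / (1 - d i)) + Real.log ((∏ i, (1 - d i)) ^ 2) := by
  have hpos : ∀ i, 0 < 1 + d i ∧ 0 < 1 - d i := fun i => by
    have := abs_lt.mp (hd i); constructor <;> linarith
  rw [Real.log_pow, Real.log_prod fun i _ => (hpos i).2.ne', Finset.mul_sum,
    ← Finset.sum_add_distrib]
  refine Finset.sum_congr rfl fun i _ => ?_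
  rw [show 1 - d i ^ 2 = (1 + d i) * (1 - d i) by ring,
    Real.log_mul (hpos i).1.ne' (hpos i).2.ne', Real.log_div (hpos i).1.ne' (hpos i).2.ne']
  push_cast; ring

theorem wyner_common_information_optimum_general (n : ℕ) (d : Fin n → ℝ)
    (hd : ∀ i, 0 < d i ∧ d i < 1)
    (Q : Matrix (Fin n) (Fin n) ℝ)
    (hDQ : (Q - Matrix.diagonal d).PosSemidef)
    (hpd₁ : (1 - Matrix.diagonal (fun i => Real.sqrt (d i)) * Q⁻¹ *
        Matrix.diagonal (fun i => Real.sqrt (d i))).PosDef)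
    (hpd₂ : (1 - Matrix.diagonal (fun i => Real.sqrt (d i)) * Q *
        Matrix.diagonal (fun i => Real.sqrt (d i))).PosDef) :
    ((1 / 2 : ℝ) * ∑ i, Real.log ((1 + d i) / (1 - d i)) ≤
      (1 / 2 : ℝ) * (∑ i, Real.log (1 - d i ^ 2)) -
        (1 / 2 : ℝ) * Real.log
          (((1 - Matrix.diagonal (fun i => Real.sqrt (d i)) * Q⁻¹ *
              Matrix.diagonal (fun i => Real.sqrt (d i))) *
            (1 - Matrix.diagonal (fun i => Real.sqrt (d i)) * Q *
              Matrix.diagonal (fun i => Real.sqrt (d i)))).det) ∧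
    (((1 / 2 : ℝ) * (∑ i, Real.log (1 - d i ^ 2)) -
        (1 / 2 : ℝ) * Real.log
          (((1 - Matrix.diagonal (fun i => Real.sqrt (d i)) * Q⁻¹ *
              Matrix.diagonal (fun i => Real.sqrt (d i))) *
            (1 - Matrix.diagonal (fun i => Real.sqrt (d i)) * Q *
              Matrix.diagonal (fun i => Real.sqrt (d i)))).det) =
      (1 / 2 : ℝ) * ∑ i, Real.log ((1 + d i) / (1 - d i))) ↔ Q = 1)) := by
  set S := Matrix.diagonal fun i => Real.sqrt (d i)
  have hQ : Q.PosDef := by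
    simpa using (posDef_diagonal_iff.mpr fun i => (hd i).1).add_posSemidef hDQ
  have hSu : IsUnit S :=
    isUnit_diagonal.mpr (Pi.isUnit_iff.mpr fun i => (Real.sqrt_pos.mpr (hd i).1).ne'.isUnit)
  have hC : (1 - S * S).det = ∏ i, (1 - d i) := by
    rw [diagonal_mul_diagonal, ← diagonal_one, diagonal_sub, det_diagonal]
    exact Finset.prod_congr rfl fun i _ => by rw [Real.mul_self_sqrt (hd i).1.le]
  obtain ⟨hle, heq⟩ :=
    det_one_sub_conj_inv_mul_det_one_sub_conj_le (isHermitian_diagonal _) hSu hQ hpd₁ hpd₂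
  rw [hC] at hle heq
  have hx := mul_pos hpd₁.det_pos hpd₂.det_pos
  have hp : 0 < (∏ i, (1 - d i)) ^ 2 := by
    have := Finset.prod_pos fun i (_ : i ∈ Finset.univ) => sub_pos.mpr (hd i).2
    positivity
  rw [det_mul, Real.sum_log_one_sub_sq d fun i => abs_lt.mpr ⟨by linarith [hd i], (hd i).2⟩]
  refine ⟨by linarith [Real.log_le_log hx hle], ?_⟩
  rw [← heq, ← Real.log_injOn_pos.eq_iff hx hp]
  constructor <;> intro h <;> linarith

/-- Let `D = diagonal d` with `1 > d 0 ≥ … ≥ d (n-1) > 0` and `D^{1/2} = diagonal (√d)`.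
For every symmetric real `n × n` matrix `Q` with `D ⪯ Q ⪯ D⁻¹` such that both
`I - D^{1/2} Q⁻¹ D^{1/2}` and `I - D^{1/2} Q D^{1/2}` are positive definite, the mutual
information expression
`(1/2)·∑ᵢ ln(1 - dᵢ²) - (1/2)·ln det((I - D^{1/2} Q⁻¹ D^{1/2})(I - D^{1/2} Q D^{1/2}))`
is at least `(1/2)·∑ᵢ ln((1 + dᵢ)/(1 - dᵢ))`, with equality if and only if `Q = I`
(Wyner's common information is uniquely attained at `Q = I`). -/
theorem wyner_common_information_optimum (n : ℕ) (hn : 0 < n) (d : Fin n → ℝ)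
    (hd : ∀ i, 0 < d i ∧ d i < 1) (hmono : Antitone d)
    (Q : Matrix (Fin n) (Fin n) ℝ) (hQsymm : Q.IsHermitian)
    (hDQ : (Q - Matrix.diagonal d).PosSemidef)
    (hQD : ((Matrix.diagonal d)⁻¹ - Q).PosSemidef)
    (hpd₁ : (1 - Matrix.diagonal (fun i => Real.sqrt (d i)) * Q⁻¹ *
        Matrix.diagonal (fun i => Real.sqrt (d i))).PosDef)
    (hpd₂ : (1 - Matrix.diagonal (fun i => Real.sqrt (d i)) * Q *
        Matrix.diagonal (fun i => Real.sqrt (d i))).PosDef) :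
    ((1 / 2 : ℝ) * ∑ i, Real.log ((1 + d i) / (1 - d i)) ≤
      (1 / 2 : ℝ) * (∑ i, Real.log (1 - d i ^ 2)) -
        (1 / 2 : ℝ) * Real.log
          (((1 - Matrix.diagonal (fun i => Real.sqrt (d i)) * Q⁻¹ *
              Matrix.diagonal (fun i => Real.sqrt (d i))) *
            (1 - Matrix.diagonal (fun i => Real.sqrt (d i)) * Q *
              Matrix.diagonal (fun i => Real.sqrt (d i)))).det) ∧
    (((1 / 2 : ℝ) * (∑ i, Real.log (1 - d i ^ 2)) -
        (1 / 2 : ℝ) * Real.log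
          (((1 - Matrix.diagonal (fun i => Real.sqrt (d i)) * Q⁻¹ *
              Matrix.diagonal (fun i => Real.sqrt (d i))) *
            (1 - Matrix.diagonal (fun i => Real.sqrt (d i)) * Q *
              Matrix.diagonal (fun i => Real.sqrt (d i)))).det) =
      (1 / 2 : ℝ) * ∑ i, Real.log ((1 + d i) / (1 - d i))) ↔ Q = 1)) :=
  wyner_common_information_optimum_general n d hd Q hDQ hpd₁ hpd₂
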